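/- Let φ, ψ be structural sets and α, β real with β ≠ 0 and α² ≠ β². If u is a C³ function from an open set Ω ⊆ ℝ³ to ℝ_{0,3} that is (φ,ψ)-harmonic (φ∂ ψ∂ u = 0) or (ψ,ψ)-inframonogenic (ψ∂ u ψ∂ = 0), then w̃ = u ψ∂ − (α/β) ψ∂ u satisfies α(φ∂ w̃ ψ∂) + β(φ∂ ψ∂ w̃) = 0 in Ω. -/

import Mathlib

noncomputable section

abbrev V3 : Type := Fin 3 → ℝ

/-- The negative-definite quadratic form on `ℝ³`, so that `CliffordAlgebra Q3 = ℝ_{0,3}`. -/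
def Q3 : QuadraticForm ℝ V3 := -(QuadraticMap.weightedSumSquares ℝ (fun _ : Fin 3 => (1:ℝ)))

/-- The real Clifford algebra `ℝ_{0,3}`. -/
abbrev Cl3 : Type := CliffordAlgebra Q3

namespace Cl3

def bCl : Module.Basis (Module.Free.ChooseBasisIndex ℝ Cl3) ℝ Cl3 := Module.Free.chooseBasis ℝ Cl3

def toLp : Cl3 →ₗ[ℝ] lp (fun _ : Module.Free.ChooseBasisIndex ℝ Cl3 => ℝ) ⊤ where
  toFun x := ⟨fun i => bCl.repr x i, by
    apply memℓp_infty
    have h1 : (Set.range ((bCl.repr x) : _ → ℝ)).Finite := by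
      apply Set.Finite.subset (((bCl.repr x).frange : Finset ℝ).finite_toSet.insert 0)
      rintro y ⟨i, rfl⟩
      by_cases h : (bCl.repr x) i = 0
      · simp [h]
      · exact Set.mem_insert_of_mem _ (by
          simp only [Finset.mem_coe, Finsupp.mem_frange]
          exact ⟨h, i, rfl⟩)
    have h2 : (Set.range fun i => ‖(bCl.repr x) i‖).Finite := by
      have := h1.image norm
      apply this.subset
      rintro y ⟨i, rfl⟩
      exact ⟨(bCl.repr x) i, ⟨i, rfl⟩, rfl⟩
    exact h2.bddAbove⟩
  map_add' x y := by ext i; simp <;> rfl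
  map_smul' c x := by ext i; simp

lemma toLp_injective : Function.Injective toLp := by
  intro x y h
  apply bCl.repr.injective
  ext i
  exact congrFun (congrArg Subtype.val h) i

instance : NormedAddCommGroup Cl3 := NormedAddCommGroup.induced Cl3 _ toLp toLp_injective
instance : NormedSpace ℝ Cl3 := NormedSpace.induced ℝ Cl3 _ toLp

end Cl3

/-- Embedding of vectors `ℝ³ ⊂ ℝ_{0,3}`. -/
def ι3 : V3 →ₗ[ℝ] Cl3 := CliffordAlgebra.ι Q3

/-- `ψ` is a structural set: `ψⁱψʲ + ψʲψⁱ = -2δᵢⱼ` inside `ℝ_{0,3}`. -/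
def StructuralSet (ψ : Fin 3 → V3) : Prop :=
  ∀ i j, ι3 (ψ i) * ι3 (ψ j) + ι3 (ψ j) * ι3 (ψ i)
      = algebraMap ℝ Cl3 (if i = j then -2 else 0)

/-- Partial derivative `∂f/∂xᵢ`. -/
def pd (i : Fin 3) (f : V3 → Cl3) : V3 → Cl3 := fun x => fderiv ℝ f x (Pi.single i 1)

/-- Left Dirac operator `ψ∂ f = Σᵢ ψⁱ ∂f/∂xᵢ`. -/
def DL (ψ : Fin 3 → V3) (f : V3 → Cl3) : V3 → Cl3 := fun x => ∑ i, ι3 (ψ i) * pd i f x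

/-- Right Dirac operator `f ψ∂ = Σᵢ (∂f/∂xᵢ) ψⁱ`. -/
def DR (ψ : Fin 3 → V3) (f : V3 → Cl3) : V3 → Cl3 := fun x => ∑ i, pd i f x * ι3 (ψ i)

/-- Two-sided operator `φ∂ f ψ∂ = Σᵢⱼ φⁱ (∂²f/∂xᵢ∂xⱼ) ψʲ`. -/
def DLR (φ ψ : Fin 3 → V3) (f : V3 → Cl3) : V3 → Cl3 :=
  fun x => ∑ i, ∑ j, ι3 (φ i) * pd i (pd j f) x * ι3 (ψ j)

/-- Componentwise Laplacian. -/
def lap (f : V3 → Cl3) : V3 → Cl3 := fun x => ∑ i, pd i (pd i f) x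

/-- `ν(a) = Σᵢ ψⁱ a ψⁱ`. -/
def nu (ψ : Fin 3 → V3) (a : Cl3) : Cl3 := ∑ i, ι3 (ψ i) * a * ι3 (ψ i)

/-- `ω(a) = Σᵢ φⁱ a ψⁱ`. -/
def om (φ ψ : Fin 3 → V3) (a : Cl3) : Cl3 := ∑ i, ι3 (φ i) * a * ι3 (ψ i)

/-- `x_ψ = Σᵢ ψⁱ xᵢ`. -/
def xPsi (ψ : Fin 3 → V3) (x : V3) : Cl3 := ∑ i, x i • ι3 (ψ i)

/-!
Because `ψ` is a structural set, `ψ∂ ψ∂ = -Δ` and `· ψ∂ ψ∂ = -Δ` on `C²` functions, and left and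
right Dirac operators commute by Schwarz's theorem. Hence
`α (w̃ ψ∂) + β (ψ∂ w̃) = ((β² - α²) / β) (ψ∂ u ψ∂)`, and applying `φ∂` on the left turns the
claim into `φ∂ (ψ∂ u ψ∂) = 0`. For harmonic `u` this is `(φ∂ ψ∂ u) ψ∂ = 0`; for inframonogenic
`u` it is `φ∂` applied to zero.
-/

open Filter Topology

/-- Finite dimensionality makes Clifford multiplication continuous for the norm on `Cl3`. -/
instance : Module.Finite ℝ Cl3 :=
  haveI : Module.Finite ℝ (ExteriorAlgebra ℝ V3) :=
    .of_basis (Pi.basisFun ℝ (Fin 3)).ExteriorAlgebra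
  .equiv (CliffordAlgebra.equivExterior Q3).symm

theorem sum_sum_mul_mul_eq_neg_sum_of_anticomm {A ι : Type*} [Ring A] [Algebra ℝ A] [Fintype ι]
    [DecidableEq ι] {e : ι → A}
    (he : ∀ i j, e i * e j + e j * e i = algebraMap ℝ A (if i = j then -2 else 0))
    {a : ι → ι → A} (ha : ∀ i j, a i j = a j i) :
    ∑ i, ∑ j, e i * e j * a i j = -∑ i, a i i := by
  have hswap : ∑ i, ∑ j, e i * e j * a i j = ∑ i, ∑ j, e j * e i * a i j := by
    rw [Finset.sum_comm]
    simp only [ha]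
  have hdouble : (2 : ℝ) • ∑ i, ∑ j, e i * e j * a i j = (2 : ℝ) • -∑ i, a i i := by
    calc (2 : ℝ) • ∑ i, ∑ j, e i * e j * a i j
        = ∑ i, ∑ j, (e i * e j + e j * e i) * a i j := by
          rw [two_smul]
          nth_rewrite 2 [hswap]
          simp only [add_mul, Finset.sum_add_distrib]
      _ = ∑ i, (-2 : ℝ) • a i i := by
          simp only [he, ← Algebra.smul_def, ite_smul, zero_smul, Finset.sum_ite_eq,
            Finset.mem_univ, if_true]
      _ = (2 : ℝ) • -∑ i, a i i := by
          rw [← Finset.smul_sum, neg_smul, smul_neg]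
  exact smul_right_injective A two_ne_zero hdouble

theorem sum_sum_mul_mul_eq_neg_sum_of_anticomm_right {A ι : Type*} [Ring A] [Algebra ℝ A]
    [Fintype ι] [DecidableEq ι] {e : ι → A}
    (he : ∀ i j, e i * e j + e j * e i = algebraMap ℝ A (if i = j then -2 else 0))
    {a : ι → ι → A} (ha : ∀ i j, a i j = a j i) :
    ∑ i, ∑ j, a i j * e j * e i = -∑ i, a i i := by
  apply MulOpposite.op_injective
  have he' : ∀ i j, MulOpposite.op (e i) * MulOpposite.op (e j)
      + MulOpposite.op (e j) * MulOpposite.op (e i)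
      = algebraMap ℝ Aᵐᵒᵖ (if i = j then -2 else 0) := fun i j => by
    rw [MulOpposite.algebraMap_apply, ← he i j, MulOpposite.op_add, MulOpposite.op_mul,
      MulOpposite.op_mul, add_comm]
  simpa [mul_assoc] using
    sum_sum_mul_mul_eq_neg_sum_of_anticomm he' (a := fun i j => MulOpposite.op (a i j))
      (fun i j => by rw [ha])

section PartialDerivatives

variable {f g : V3 → Cl3} {x : V3}

theorem pd_comp_linearMap (L : Cl3 →ₗ[ℝ] Cl3) (hf : DifferentiableAt ℝ f x) (i : Fin 3) :
    pd i (L ∘ f) x = L (pd i f x) := by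
  rw [pd, show (L ∘ f) = L.toContinuousLinearMap ∘ f from rfl,
    (L.toContinuousLinearMap.hasFDerivAt.comp x hf.hasFDerivAt).fderiv]
  rfl

theorem Cl3.differentiableAt_const_mul (c : Cl3) (hf : DifferentiableAt ℝ f x) :
    DifferentiableAt ℝ (fun y => c * f y) x :=
  (LinearMap.mulLeft ℝ c).toContinuousLinearMap.differentiableAt.comp x hf

theorem Cl3.differentiableAt_mul_const (c : Cl3) (hf : DifferentiableAt ℝ f x) :
    DifferentiableAt ℝ (fun y => f y * c) x :=
  (LinearMap.mulRight ℝ c).toContinuousLinearMap.differentiableAt.comp x hf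

theorem pd_const_mul (c : Cl3) (hf : DifferentiableAt ℝ f x) (i : Fin 3) :
    pd i (fun y => c * f y) x = c * pd i f x :=
  pd_comp_linearMap (LinearMap.mulLeft ℝ c) hf i

theorem pd_mul_const (c : Cl3) (hf : DifferentiableAt ℝ f x) (i : Fin 3) :
    pd i (fun y => f y * c) x = pd i f x * c :=
  pd_comp_linearMap (LinearMap.mulRight ℝ c) hf i

theorem pd_add (hf : DifferentiableAt ℝ f x) (hg : DifferentiableAt ℝ g x) (i : Fin 3) :
    pd i (f + g) x = pd i f x + pd i g x := by
  rw [pd, fderiv_add hf hg]; rfl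

theorem pd_sub (hf : DifferentiableAt ℝ f x) (hg : DifferentiableAt ℝ g x) (i : Fin 3) :
    pd i (f - g) x = pd i f x - pd i g x := by
  rw [pd, fderiv_sub hf hg]; rfl

theorem pd_const_smul (c : ℝ) (f : V3 → Cl3) (i : Fin 3) : pd i (c • f) x = c • pd i f x := by
  rw [pd, fderiv_const_smul_field]; rfl

theorem pd_sum {ι : Type*} {s : Finset ι} {F : ι → V3 → Cl3}
    (hF : ∀ j ∈ s, DifferentiableAt ℝ (F j) x) (i : Fin 3) :
    pd i (fun y => ∑ j ∈ s, F j y) x = ∑ j ∈ s, pd i (F j) x := by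
  rw [pd, fderiv_fun_sum hF, FunLike.coe_sum, Finset.sum_apply]; rfl

theorem pd_congr (h : f =ᶠ[𝓝 x] g) (i : Fin 3) : pd i f x = pd i g x := by
  rw [pd, pd, h.fderiv_eq]

theorem pd_zero (i : Fin 3) : pd i 0 x = 0 := by
  rw [pd, fderiv_zero]; rfl

theorem ContDiffAt.pd {n : WithTop ℕ∞} (hf : ContDiffAt ℝ (n + 1) f x) (i : Fin 3) :
    ContDiffAt ℝ n (pd i f) x :=
  (hf.fderiv_right le_rfl).clm_apply contDiffAt_const

theorem differentiableAt_pd (hf : ContDiffAt ℝ 2 f x) (i : Fin 3) :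
    DifferentiableAt ℝ (pd i f) x :=
  (ContDiffAt.pd (n := 1) hf i).differentiableAt one_ne_zero

theorem pd_pd_comm (hf : ContDiffAt ℝ 2 f x) (i j : Fin 3) :
    pd i (pd j f) x = pd j (pd i f) x := by
  have hsnd : ∀ a b : Fin 3,
      pd a (pd b f) x = fderiv ℝ (fderiv ℝ f) x (Pi.single a 1) (Pi.single b 1) := fun a b => by
    have hdiff : DifferentiableAt ℝ (fderiv ℝ f) x :=
      (hf.fderiv_right (m := 1) le_rfl).differentiableAt one_ne_zero
    rw [pd, show pd b f = fun y => fderiv ℝ f y (Pi.single b 1) from rfl,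
      fderiv_clm_apply hdiff (differentiableAt_const _)]
    simp
  rw [hsnd, hsnd, hf.isSymmSndFDerivAt (by simp)]

end PartialDerivatives

section DiracOperators

variable {φ ψ : Fin 3 → V3} {f g : V3 → Cl3} {x : V3}

theorem ContDiffAt.DL {n : WithTop ℕ∞} (hf : ContDiffAt ℝ (n + 1) f x) :
    ContDiffAt ℝ n (DL ψ f) x :=
  ContDiffAt.sum fun i _ =>
    (LinearMap.mulLeft ℝ (ι3 (ψ i))).toContinuousLinearMap.contDiff.contDiffAt.comp x (hf.pd i)

theorem ContDiffAt.DR {n : WithTop ℕ∞} (hf : ContDiffAt ℝ (n + 1) f x) :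
    ContDiffAt ℝ n (DR ψ f) x :=
  ContDiffAt.sum fun i _ =>
    (LinearMap.mulRight ℝ (ι3 (ψ i))).toContinuousLinearMap.contDiff.contDiffAt.comp x (hf.pd i)

theorem DL_congr (h : f =ᶠ[𝓝 x] g) : DL ψ f x = DL ψ g x := by
  simp only [DL, pd_congr h]

theorem DR_congr (h : f =ᶠ[𝓝 x] g) : DR ψ f x = DR ψ g x := by
  simp only [DR, pd_congr h]

theorem DL_zero : DL ψ 0 x = 0 := by
  simp [DL, pd_zero]

theorem DR_zero : DR ψ 0 x = 0 := by
  simp [DR, pd_zero]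

theorem DL_add (hf : DifferentiableAt ℝ f x) (hg : DifferentiableAt ℝ g x) :
    DL ψ (f + g) x = DL ψ f x + DL ψ g x := by
  simp only [DL, pd_add hf hg, mul_add, Finset.sum_add_distrib]

theorem DL_sub (hf : DifferentiableAt ℝ f x) (hg : DifferentiableAt ℝ g x) :
    DL ψ (f - g) x = DL ψ f x - DL ψ g x := by
  simp only [DL, pd_sub hf hg, mul_sub, Finset.sum_sub_distrib]

theorem DR_sub (hf : DifferentiableAt ℝ f x) (hg : DifferentiableAt ℝ g x) :
    DR ψ (f - g) x = DR ψ f x - DR ψ g x := by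
  simp only [DR, pd_sub hf hg, sub_mul, Finset.sum_sub_distrib]

theorem DL_const_smul (c : ℝ) (f : V3 → Cl3) : DL ψ (c • f) x = c • DL ψ f x := by
  simp only [DL, pd_const_smul, mul_smul_comm, Finset.smul_sum]

theorem DR_const_smul (c : ℝ) (f : V3 → Cl3) : DR ψ (c • f) x = c • DR ψ f x := by
  simp only [DR, pd_const_smul, smul_mul_assoc, Finset.smul_sum]

theorem pd_DL (hf : ContDiffAt ℝ 2 f x) (i : Fin 3) :
    pd i (DL ψ f) x = ∑ j, ι3 (ψ j) * pd i (pd j f) x := by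
  unfold DL
  rw [pd_sum fun j _ => Cl3.differentiableAt_const_mul _ (differentiableAt_pd hf j)]
  exact Finset.sum_congr rfl fun j _ => pd_const_mul _ (differentiableAt_pd hf j) i

theorem pd_DR (hf : ContDiffAt ℝ 2 f x) (i : Fin 3) :
    pd i (DR ψ f) x = ∑ j, pd i (pd j f) x * ι3 (ψ j) := by
  unfold DR
  rw [pd_sum fun j _ => Cl3.differentiableAt_mul_const _ (differentiableAt_pd hf j)]
  exact Finset.sum_congr rfl fun j _ => pd_mul_const _ (differentiableAt_pd hf j) i

theorem DL_DR (hf : ContDiffAt ℝ 2 f x) : DL φ (DR ψ f) x = DLR φ ψ f x := by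
  simp only [DL, DLR, pd_DR hf, Finset.mul_sum, mul_assoc]

theorem DR_DL (hf : ContDiffAt ℝ 2 f x) : DR ψ (DL φ f) x = DLR φ ψ f x := by
  rw [DR, DLR, Finset.sum_comm]
  simp only [pd_DL hf, Finset.sum_mul, pd_pd_comm hf]

theorem DL_DL (hψ : StructuralSet ψ) (hf : ContDiffAt ℝ 2 f x) : DL ψ (DL ψ f) x = -lap f x := by
  simp only [DL, pd_DL hf, Finset.mul_sum, ← mul_assoc]
  exact sum_sum_mul_mul_eq_neg_sum_of_anticomm hψ (pd_pd_comm hf)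

theorem DR_DR (hψ : StructuralSet ψ) (hf : ContDiffAt ℝ 2 f x) : DR ψ (DR ψ f) x = -lap f x := by
  simp only [DR, pd_DR hf, Finset.sum_mul]
  exact sum_sum_mul_mul_eq_neg_sum_of_anticomm_right hψ (pd_pd_comm hf)

end DiracOperators

section Identities

variable {φ ψ : Fin 3 → V3} {u : V3 → Cl3} {x : V3}

theorem smul_DR_add_smul_DL_eq_smul_DLR (hψ : StructuralSet ψ) {α β : ℝ} (hβ : β ≠ 0)
    (hu : ContDiffAt ℝ 2 u x) :
    α • DR ψ (DR ψ u - (α / β) • DL ψ u) x + β • DL ψ (DR ψ u - (α / β) • DL ψ u) x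
      = ((β ^ 2 - α ^ 2) / β) • DLR ψ ψ u x := by
  have hDR : DifferentiableAt ℝ (DR ψ u) x := (hu.DR (n := 1)).differentiableAt one_ne_zero
  have hDL : DifferentiableAt ℝ (DL ψ u) x := (hu.DL (n := 1)).differentiableAt one_ne_zero
  rw [DR_sub hDR (hDL.const_smul _), DL_sub hDR (hDL.const_smul _), DR_const_smul,
    DL_const_smul, DR_DR hψ hu, DL_DL hψ hu, DR_DL hu, DL_DR hu]
  match_scalars <;> field_simp <;> ring

theorem DL_DLR_eq_zero_of_DL_DL_eventuallyEq_zero (hu : ContDiffAt ℝ 3 u x)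
    (h : DL φ (DL ψ u) =ᶠ[𝓝 x] 0) : DL φ (DLR ψ ψ u) x = 0 := by
  have hDLu : ContDiffAt ℝ 2 (DL ψ u) x := hu.DL
  have hDLR : DLR ψ ψ u =ᶠ[𝓝 x] DR ψ (DL ψ u) :=
    (hu.eventually (by simp)).mono fun y hy => (DR_DL (hy.of_le (by norm_num))).symm
  calc DL φ (DLR ψ ψ u) x = DL φ (DR ψ (DL ψ u)) x := DL_congr hDLR
    _ = DR ψ (DL φ (DL ψ u)) x := by rw [DL_DR hDLu, DR_DL hDLu]
    _ = 0 := by rw [DR_congr h, DR_zero]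

end Identities

theorem stmt17_general (φ ψ : Fin 3 → V3) (hψ : StructuralSet ψ)
    (α β : ℝ) (hβ : β ≠ 0)
    (Ω : Set V3) (hΩ : IsOpen Ω) (u : V3 → Cl3) (hu : ContDiffOn ℝ 3 u Ω)
    (hcase : (∀ x ∈ Ω, DL φ (DL ψ u) x = 0) ∨ (∀ x ∈ Ω, DLR ψ ψ u x = 0))
    (w : V3 → Cl3) (hw : w = fun x => DR ψ u x - (α / β) • DL ψ u x) :
    ∀ x ∈ Ω, α • DLR φ ψ w x + β • DL φ (DL ψ w) x = 0 := by
  intro x hx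
  replace hw : w = DR ψ u - (α / β) • DL ψ u := hw
  have hΩx : Ω ∈ 𝓝 x := hΩ.mem_nhds hx
  have hu_near : ∀ᶠ y in 𝓝 x, ContDiffAt ℝ 3 u y :=
    eventually_of_mem hΩx fun y hy => hu.contDiffAt (hΩ.mem_nhds hy)
  have hux : ContDiffAt ℝ 3 u x := hu_near.self_of_nhds
  have hw2 : ContDiffAt ℝ 2 w x := by
    rw [hw]; exact hux.DR.sub (hux.DL.const_smul (α / β))
  have hcomb : α • DR ψ w + β • DL ψ w =ᶠ[𝓝 x] ((β ^ 2 - α ^ 2) / β) • DLR ψ ψ u :=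
    hu_near.mono fun y hy => by
      rw [hw]; exact smul_DR_add_smul_DL_eq_smul_DLR hψ hβ (hy.of_le (by norm_num))
  have hDLR : DL φ (DLR ψ ψ u) x = 0 := by
    rcases hcase with harmonic | inframonogenic
    · exact DL_DLR_eq_zero_of_DL_DL_eventuallyEq_zero hux (eventually_of_mem hΩx harmonic)
    · rw [DL_congr (eventually_of_mem hΩx inframonogenic : DLR ψ ψ u =ᶠ[𝓝 x] 0), DL_zero]
  calc α • DLR φ ψ w x + β • DL φ (DL ψ w) x
      = DL φ (α • DR ψ w + β • DL ψ w) x := by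
        rw [DL_add (((hw2.DR (n := 1)).differentiableAt one_ne_zero).const_smul α)
          (((hw2.DL (n := 1)).differentiableAt one_ne_zero).const_smul β), DL_const_smul,
          DL_const_smul, DL_DR hw2]
    _ = ((β ^ 2 - α ^ 2) / β) • DL φ (DLR ψ ψ u) x := by rw [DL_congr hcomb, DL_const_smul]
    _ = 0 := by rw [hDLR, smul_zero]

/-- if `u` is `(φ,ψ)`-harmonic or `(ψ,ψ)`-inframonogenic, then
`w̃ = uψ∂ - (α/β)ψ∂u` solves `α(φ∂ w̃ ψ∂) + β(φ∂ψ∂ w̃) = 0`. -/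
theorem stmt17 (φ ψ : Fin 3 → V3) (hφ : StructuralSet φ) (hψ : StructuralSet ψ)
    (α β : ℝ) (hβ : β ≠ 0) (hαβ : α ^ 2 ≠ β ^ 2)
    (Ω : Set V3) (hΩ : IsOpen Ω) (u : V3 → Cl3) (hu : ContDiffOn ℝ 3 u Ω)
    (hcase : (∀ x ∈ Ω, DL φ (DL ψ u) x = 0) ∨ (∀ x ∈ Ω, DLR ψ ψ u x = 0))
    (w : V3 → Cl3) (hw : w = fun x => DR ψ u x - (α / β) • DL ψ u x) :
    ∀ x ∈ Ω, α • DLR φ ψ w x + β • DL φ (DL ψ w) x = 0 :=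
  stmt17_general φ ψ hψ α β hβ Ω hΩ u hu hcase w hw
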